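/- If G is an ergodic strictly unbalanced signed digraph, then the steady state white-color distribution of the voter model is x = (1/2)·1, independent of the initial distribution x_0. -/

import Mathlib

open Matrix Filter Topology Finset

/-- A directed walk of given length in a digraph with edge relation `E`. -/
def DiWalk {V : Type*} (E : V → V → Prop) : ℕ → V → V → Prop
  | 0, i, j => i = j
  | n + 1, i, j => ∃ k, E i k ∧ DiWalk E n k j

/-- Strong connectivity: every node reaches every other node by some walk. -/
def DiStronglyConnected {V : Type*} (E : V → V → Prop) : Prop :=
  ∀ i j : V, ∃ n : ℕ, DiWalk E n i j

/-- Aperiodicity: the gcd of the lengths of all (positive-length) closed walks is 1. -/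
def DiAperiodic {V : Type*} (E : V → V → Prop) : Prop :=
  ∀ d : ℕ, (∀ n : ℕ, 0 < n → (∃ i, DiWalk E n i i) → d ∣ n) → d = 1

/-- A signed directed walk of given length and total sign `s` (product of edge signs). -/
def SWalk {V : Type*} (E : V → V → Prop) (σ : V → V → ℤ) : ℕ → ℤ → V → V → Prop
  | 0, s, i, j => i = j ∧ s = 1
  | n + 1, s, i, j => ∃ k s', E i k ∧ SWalk E σ n s' k j ∧ s = σ i k * s'

/-- Balanced signed digraph: a bipartition with positive edges inside parts,
negative edges across. -/
def SBalancedG {V : Type*} (E : V → V → Prop) (σ : V → V → ℤ) : Prop :=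
  ∃ S : Set V, ∀ i j, E i j → (σ i j = 1 ↔ (i ∈ S ↔ j ∈ S))

/-- Anti-balanced signed digraph: negative edges inside parts, positive edges across. -/
def SAntiBalancedG {V : Type*} (E : V → V → Prop) (σ : V → V → ℤ) : Prop :=
  ∃ S : Set V, ∀ i j, E i j → (σ i j = -1 ↔ (i ∈ S ↔ j ∈ S))

/-- Weighted out-degree `d_i = Σ_j |A_{ij}|` of a signed weighted digraph. -/
noncomputable def sdeg {V : Type*} [Fintype V] (A : Matrix V V ℝ) (i : V) : ℝ :=
  ∑ j, |A i j|

/-- The signed transition matrix `P = D⁻¹A`. -/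
noncomputable def signedP {V : Type*} [Fintype V] (A : Matrix V V ℝ) : Matrix V V ℝ :=
  Matrix.of fun i j => A i j / sdeg A i

/-- The unsigned transition matrix `P̄ = D⁻¹|A|`. -/
noncomputable def unsignedP {V : Type*} [Fintype V] (A : Matrix V V ℝ) : Matrix V V ℝ :=
  Matrix.of fun i j => |A i j| / sdeg A i

/-- The vector `g⁻ = D⁻¹A⁻1` of weighted fractions of outgoing negative edges. -/
noncomputable def gneg {V : Type*} [Fintype V] (A : Matrix V V ℝ) (i : V) : ℝ :=
  (∑ j, max (-(A i j)) 0) / sdeg A i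

/-- Ergodicity of the underlying (unsigned) digraph of a weighted signed digraph. -/
def SErgodic {V : Type*} (A : Matrix V V ℝ) : Prop :=
  DiStronglyConnected (fun i j => A i j ≠ 0) ∧ DiAperiodic (fun i j => A i j ≠ 0)

/-- Balanced weighted signed digraph. -/
def SBalancedM {V : Type*} (A : Matrix V V ℝ) : Prop :=
  ∃ S : Set V, ∀ i j, A i j ≠ 0 → (0 < A i j ↔ (i ∈ S ↔ j ∈ S))

/-- Anti-balanced weighted signed digraph. -/
def SAntiBalancedM {V : Type*} (A : Matrix V V ℝ) : Prop :=
  ∃ S : Set V, ∀ i j, A i j ≠ 0 → (A i j < 0 ↔ (i ∈ S ↔ j ∈ S))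

/-- `π` is a stationary distribution of the unsigned chain `P̄ = D⁻¹|A|`. -/
def SStationary {V : Type*} [Fintype V] (A : Matrix V V ℝ) (π : V → ℝ) : Prop :=
  (∀ i, 0 ≤ π i) ∧ (∑ i, π i = 1) ∧ ∀ j, ∑ i, π i * unsignedP A i j = π j

/-!
Put `y_t = x_t - ½ 𝟙`. Since `(D - A) 𝟙 = 2 A⁻ 𝟙`, the vector `½ 𝟙` is a fixed point of the affine
map, so `y_t = Pᵗ y_0` and it suffices that `Pᵗ → 0`. Write `P = P⁺ - P⁻` and
`P̄ = P⁺ + P⁻ = D⁻¹|A|`, which is row-stochastic. Expanding the powers,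
`Pⁿ = Q⁺ₙ - Q⁻ₙ` and `P̄ⁿ = Q⁺ₙ + Q⁻ₙ`, where `Q^±ₙ` collects the walks of length `n` of sign `±`.
Hence `|Pⁿ| ≤ P̄ⁿ` entrywise, strictly between two vertices joined by walks of length `n` of both
signs. Strict unbalance and aperiodicity provide such walks from every vertex to itself: a negative
closed walk (not balanced) and a positive closed walk of odd length (not antibalanced, combined
with an odd closed walk from aperiodicity), both repeated to a common length. So every row of
`|P^N|` sums to less than `1` for large `N`, that is `‖P^N‖_∞ < 1`.
-/

section Walks

variable {V : Type*} {E : V → V → Prop} {σ : V → V → ℤ}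

theorem DiWalk.append {n m : ℕ} {i j k : V} (h₁ : DiWalk E n i j) (h₂ : DiWalk E m j k) :
    DiWalk E (n + m) i k := by
  induction n generalizing i with
  | zero => obtain rfl := h₁; simpa using h₂
  | succ n ih =>
    obtain ⟨l, hil, hw⟩ := h₁
    rw [Nat.add_right_comm]
    exact ⟨l, hil, ih hw⟩

theorem DiWalk.exists_sWalk (σ : V → V → ℤ) {n : ℕ} {i j : V} (h : DiWalk E n i j) :
    ∃ s, SWalk E σ n s i j := by
  induction n generalizing i with
  | zero => exact ⟨1, h, rfl⟩
  | succ n ih =>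
    obtain ⟨k, hik, hw⟩ := h
    obtain ⟨s, hs⟩ := ih hw
    exact ⟨σ i k * s, k, s, hik, hs, rfl⟩

namespace SWalk

theorem single {i j : V} (h : E i j) : SWalk E σ 1 (σ i j) i j :=
  ⟨j, 1, h, ⟨rfl, rfl⟩, (mul_one _).symm⟩

theorem append {n m : ℕ} {s t : ℤ} {i j k : V} (h₁ : SWalk E σ n s i j)
    (h₂ : SWalk E σ m t j k) : SWalk E σ (n + m) (s * t) i k := by
  induction n generalizing s i with
  | zero => obtain ⟨rfl, rfl⟩ := h₁; simpa using h₂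
  | succ n ih =>
    obtain ⟨l, s, hil, hw, rfl⟩ := h₁
    rw [Nat.add_right_comm]
    exact ⟨l, s * t, hil, ih hw, by ring⟩

theorem pow {n : ℕ} {s : ℤ} {i : V} (h : SWalk E σ n s i i) (k : ℕ) :
    SWalk E σ (n * k) (s ^ k) i i := by
  induction k with
  | zero => exact ⟨rfl, pow_zero s⟩
  | succ k ih => simpa only [Nat.mul_succ, pow_succ] using ih.append h

theorem sign_eq_one_or_neg_one (hσ : ∀ i j, σ i j = 1 ∨ σ i j = -1) {n : ℕ} {s : ℤ} {i j : V}
    (h : SWalk E σ n s i j) : s = 1 ∨ s = -1 := by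
  induction n generalizing s i with
  | zero => exact Or.inl h.2
  | succ n ih =>
    obtain ⟨k, s, -, hw, rfl⟩ := h
    rcases hσ i k with h₁ | h₁ <;> rcases ih hw with h₂ | h₂ <;> simp [h₁, h₂]

theorem of_neg {n : ℕ} {s : ℤ} {i j : V} (h : SWalk E (fun i j => -σ i j) n s i j) :
    SWalk E σ n ((-1) ^ n * s) i j := by
  induction n generalizing s i with
  | zero => obtain ⟨rfl, rfl⟩ := h; exact ⟨rfl, by ring⟩
  | succ n ih =>
    obtain ⟨k, s, hik, hw, rfl⟩ := h
    exact ⟨k, _, hik, ih hw, by ring⟩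

end SWalk

variable (hσ : ∀ i j, σ i j = 1 ∨ σ i j = -1) (hsc : DiStronglyConnected E)
include hσ hsc

theorem sBalancedG_of_forall_closed_sWalk {v : V} (h : ∀ n s, SWalk E σ n s v v → s = 1) :
    SBalancedG E σ := by
  have hunique : ∀ {j n m s t}, SWalk E σ n s v j → SWalk E σ m t v j → s = t := by
    intro j n m s t h₁ h₂
    obtain ⟨l, hback⟩ := hsc j v
    obtain ⟨u, hu⟩ := hback.exists_sWalk σ
    have hu0 : u ≠ 0 := by rcases hu.sign_eq_one_or_neg_one hσ with rfl | rfl <;> decide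
    exact mul_right_cancel₀ hu0 ((h _ _ (h₁.append hu)).trans (h _ _ (h₂.append hu)).symm)
  refine ⟨{j | ∃ n, SWalk E σ n 1 v j}, fun i j hij => ?_⟩
  obtain ⟨n, hn⟩ := hsc v i
  obtain ⟨s, hs⟩ := hn.exists_sWalk σ
  have hj := hs.append (SWalk.single hij)
  have hiS : (∃ n, SWalk E σ n 1 v i) ↔ s = 1 :=
    ⟨fun ⟨_, hm⟩ => hunique hs hm, fun h => ⟨n, h ▸ hs⟩⟩
  have hjS : (∃ n, SWalk E σ n 1 v j) ↔ s * σ i j = 1 :=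
    ⟨fun ⟨_, hm⟩ => hunique hj hm, fun h => ⟨n + 1, h ▸ hj⟩⟩
  simp only [Set.mem_ofPred_eq, hiS, hjS]
  rcases hs.sign_eq_one_or_neg_one hσ with rfl | rfl <;> rcases hσ i j with h | h <;> simp [h]

theorem exists_closed_sWalk_neg_one (hnb : ¬ SBalancedG E σ) (v : V) :
    ∃ n, SWalk E σ n (-1) v v := by
  by_contra! hneg
  exact hnb (sBalancedG_of_forall_closed_sWalk hσ hsc fun n s hw =>
    (hw.sign_eq_one_or_neg_one hσ).resolve_right fun hs => hneg n (hs ▸ hw))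

end Walks

section Cycles

variable {V : Type*} {E : V → V → Prop} {σ : V → V → ℤ}

theorem DiAperiodic.exists_odd_closed_diWalk (hap : DiAperiodic E) (hsc : DiStronglyConnected E)
    (v : V) : ∃ n, Odd n ∧ DiWalk E n v v := by
  obtain ⟨n, hn, i, hi⟩ : ∃ n, Odd n ∧ ∃ i, DiWalk E n i i := by
    by_contra! h
    exact absurd (hap 2 fun n _ ⟨i, hi⟩ =>
      even_iff_two_dvd.1 (Nat.not_odd_iff_even.1 fun hn => h n hn i hi)) (by decide)
  obtain ⟨a, hvi⟩ := hsc v i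
  obtain ⟨b, hiv⟩ := hsc i v
  rcases Nat.even_or_odd (a + b) with hab | hab
  · refine ⟨a + (n + b), ?_, hvi.append (hi.append hiv)⟩
    rw [Nat.add_left_comm]
    exact hn.add_even hab
  · exact ⟨a + b, hab, hvi.append hiv⟩

variable (hσ : ∀ i j, σ i j = 1 ∨ σ i j = -1) (hsc : DiStronglyConnected E)
  (hap : DiAperiodic E)
include hσ hsc hap

theorem exists_odd_closed_sWalk_one (hna : ¬ SBalancedG E (fun i j => -σ i j)) (v : V) :
    ∃ n, Odd n ∧ SWalk E σ n 1 v v := by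
  have hσneg : ∀ i j, -σ i j = 1 ∨ -σ i j = -1 := fun i j => by
    rcases hσ i j with h | h <;> simp [h]
  obtain ⟨p, hp⟩ := exists_closed_sWalk_neg_one hσneg hsc hna v
  rcases Nat.even_or_odd p with hpe | hpo
  · obtain ⟨r, hr, hw⟩ := hap.exists_odd_closed_diWalk hsc v
    obtain ⟨s, hs⟩ := hw.exists_sWalk σ
    rcases hs.sign_eq_one_or_neg_one hσ with rfl | rfl
    · exact ⟨r, hr, hs⟩
    · exact ⟨p + r, hpe.add_odd hr, by simpa [hpe.neg_one_pow] using hp.of_neg.append hs⟩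
  · exact ⟨p, hpo, by simpa [hpo.neg_one_pow] using hp.of_neg⟩

theorem exists_closed_sWalk_one_and_neg_one (hnb : ¬ SBalancedG E σ)
    (hna : ¬ SBalancedG E (fun i j => -σ i j)) (v : V) :
    ∃ n, SWalk E σ n 1 v v ∧ SWalk E σ n (-1) v v := by
  obtain ⟨q, hq⟩ := exists_closed_sWalk_neg_one hσ hsc hnb v
  obtain ⟨m, hm, hpos⟩ := exists_odd_closed_sWalk_one hσ hsc hap hna v
  refine ⟨m * q, by simpa using hpos.pow q, ?_⟩
  simpa [mul_comm, hm.neg_one_pow] using hq.pow m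

end Cycles

noncomputable def edgeSign {V : Type*} (A : Matrix V V ℝ) (i j : V) : ℤ :=
  if 0 < A i j then 1 else -1

theorem edgeSign_eq_one_or_neg_one {V : Type*} (A : Matrix V V ℝ) (i j : V) :
    edgeSign A i j = 1 ∨ edgeSign A i j = -1 := by
  unfold edgeSign; split_ifs <;> simp

section Ergodic

variable {V : Type*} {A : Matrix V V ℝ}

theorem sBalancedM_of_sBalancedG_edgeSign
    (h : SBalancedG (fun i j => A i j ≠ 0) (edgeSign A)) : SBalancedM A := by
  obtain ⟨S, hS⟩ := h
  refine ⟨S, fun i j hij => (Iff.trans ?_ (hS i j hij))⟩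
  unfold edgeSign
  split_ifs with h <;> simp [h]

theorem sAntiBalancedM_of_sBalancedG_neg_edgeSign
    (h : SBalancedG (fun i j => A i j ≠ 0) (fun i j => -edgeSign A i j)) : SAntiBalancedM A := by
  obtain ⟨S, hS⟩ := h
  refine ⟨S, fun i j hij => (Iff.trans ?_ (hS i j hij))⟩
  simp only [edgeSign]
  split_ifs with h
  · simp [h.le.not_gt]
  · simp [lt_of_le_of_ne (not_lt.1 h) hij]

theorem SErgodic.sdeg_pos [Fintype V] (herg : SErgodic A) (i : V) : 0 < sdeg A i := by
  obtain ⟨_ | n, hn, hw⟩ := herg.2.exists_odd_closed_diWalk herg.1 i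
  · exact absurd hn (by decide)
  · obtain ⟨j, hij, -⟩ := hw
    exact (abs_pos.2 hij).trans_le
      (single_le_sum (f := fun j => |A i j|) (fun j _ => abs_nonneg _) (mem_univ j))

end Ergodic

/-- Expanding `(B ± C) ^ n` into words in `B` and `C`, `signSplitPow B C n 1` collects the words
with an even number of letters `C` and `signSplitPow B C n (-1)` those with an odd number. -/
def signSplitPow {V R : Type*} [Fintype V] [DecidableEq V] [Ring R] (B C : Matrix V V R) :
    ℕ → ℤ → Matrix V V R
  | 0, s => if s = 1 then 1 else 0
  | n + 1, s => B * signSplitPow B C n s + C * signSplitPow B C n (-s)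

namespace signSplitPow

variable {V R : Type*} [Fintype V] [DecidableEq V] [Ring R] (B C : Matrix V V R)

theorem sub_pow (n : ℕ) : (B - C) ^ n = signSplitPow B C n 1 - signSplitPow B C n (-1) := by
  induction n with
  | zero => simp [signSplitPow]
  | succ n ih =>
    rw [pow_succ', ih]
    simp only [signSplitPow, neg_neg]
    noncomm_ring

theorem add_pow (n : ℕ) : (B + C) ^ n = signSplitPow B C n 1 + signSplitPow B C n (-1) := by
  induction n with
  | zero => simp [signSplitPow]
  | succ n ih =>
    rw [pow_succ', ih]
    simp only [signSplitPow, neg_neg]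
    noncomm_ring

variable [PartialOrder R] [IsOrderedRing R] {B C}

theorem nonneg (hB : ∀ i j, 0 ≤ B i j) (hC : ∀ i j, 0 ≤ C i j) (n : ℕ) (s : ℤ) (i j : V) :
    0 ≤ signSplitPow B C n s i j := by
  induction n generalizing s i j with
  | zero =>
    by_cases hs : s = 1 <;> by_cases hij : i = j <;> simp [signSplitPow, hs, hij, one_apply]
  | succ n ih =>
    simp only [signSplitPow, Matrix.add_apply, mul_apply]
    exact add_nonneg (sum_nonneg fun k _ => mul_nonneg (hB i k) (ih s k j))
      (sum_nonneg fun k _ => mul_nonneg (hC i k) (ih (-s) k j))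

end signSplitPow

theorem Matrix.sum_abs_mul_apply_le {l m n R : Type*} [Fintype m] [Fintype n] [Ring R]
    [LinearOrder R] [IsStrictOrderedRing R] {M : Matrix l m R} {B : Matrix m n R}
    (hB : ∀ k, ∑ j, |B k j| ≤ 1) (i : l) : ∑ j, |(M * B) i j| ≤ ∑ k, |M i k| :=
  calc ∑ j, |(M * B) i j| ≤ ∑ j, ∑ k, |M i k| * |B k j| :=
        sum_le_sum fun j _ => by
          simpa only [mul_apply, abs_mul] using abs_sum_le_sum_abs (fun k => M i k * B k j) univ
    _ = ∑ k, |M i k| * ∑ j, |B k j| := by rw [sum_comm]; simp only [mul_sum]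
    _ ≤ ∑ k, |M i k| := sum_le_sum fun k _ => mul_le_of_le_one_right (abs_nonneg _) (hB k)

theorem tendsto_norm_pow_atTop_nhds_zero_of_norm_pow_lt_one {R : Type*} [SeminormedRing R]
    {a : R} {N : ℕ} (hN : 0 < N) (h : ‖a ^ N‖ < 1) :
    Tendsto (fun n => ‖a ^ n‖) atTop (𝓝 0) := by
  set C := ∑ r ∈ range N, ‖a ^ r‖
  have hbound : ∀ n, ‖a ^ n‖ ≤ ‖(a ^ N) ^ (n / N)‖ * C := fun n =>
    calc ‖a ^ n‖ = ‖(a ^ N) ^ (n / N) * a ^ (n % N)‖ := by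
          rw [← pow_mul, ← pow_add, Nat.div_add_mod]
      _ ≤ ‖(a ^ N) ^ (n / N)‖ * ‖a ^ (n % N)‖ := norm_mul_le _ _
      _ ≤ ‖(a ^ N) ^ (n / N)‖ * C := by
          gcongr
          exact single_le_sum (fun r _ => norm_nonneg (a ^ r)) (mem_range.2 (Nat.mod_lt n hN))
  have hlim : Tendsto (fun n => ‖(a ^ N) ^ (n / N)‖ * C) atTop (𝓝 0) := by
    simpa using ((tendsto_pow_atTop_nhds_zero_of_norm_lt_one h).norm.comp
      (Nat.tendsto_div_const_atTop hN.ne')).mul_const C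
  exact squeeze_zero (fun n => norm_nonneg _) hbound hlim

theorem affine_iterate_sub_eq_pow_mulVec {V R : Type*} [Fintype V] [DecidableEq V] [Ring R]
    {M : Matrix V V R} {g c : V → R} (hc : M *ᵥ c + g = c) {x : ℕ → V → R}
    (hx : ∀ t, x (t + 1) = M *ᵥ x t + g) (t : ℕ) :
    x t - c = (M ^ t) *ᵥ (x 0 - c) := by
  induction t with
  | zero => simp
  | succ t ih =>
    conv_lhs => rw [hx t, ← hc]
    rw [pow_succ', ← mulVec_mulVec, ← ih, mulVec_sub]
    abel

section LinftyOp

attribute [local instance] Matrix.linftyOpNormedAddCommGroup Matrix.linftyOpNormedRing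

theorem Matrix.linfty_opNorm_lt_one_iff {V : Type*} [Fintype V] {M : Matrix V V ℝ} :
    ‖M‖ < 1 ↔ ∀ i, ∑ j, |M i j| < 1 := by
  simp only [linfty_opNorm_def, ← NNReal.coe_one, NNReal.coe_lt_coe,
    Finset.sup_lt_iff (zero_lt_one' NNReal), mem_univ, true_imp_iff]
  refine forall_congr' fun i => ?_
  rw [← NNReal.coe_lt_coe, NNReal.coe_sum]
  simp [Real.norm_eq_abs]

theorem tendsto_affine_iterate_of_sum_abs_pow_lt_one {V : Type*} [Fintype V] [DecidableEq V]
    {M : Matrix V V ℝ} {g c : V → ℝ} (hc : M *ᵥ c + g = c) {N : ℕ} (hN : 0 < N)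
    (hMN : ∀ i, ∑ j, |(M ^ N) i j| < 1) {x : ℕ → V → ℝ} (hx : ∀ t, x (t + 1) = M *ᵥ x t + g) :
    Tendsto x atTop (𝓝 c) := by
  rw [tendsto_iff_norm_sub_tendsto_zero]
  refine squeeze_zero (fun t => norm_nonneg _) (fun t => ?_)
    (by simpa using
      (tendsto_norm_pow_atTop_nhds_zero_of_norm_pow_lt_one hN
        (linfty_opNorm_lt_one_iff.2 hMN)).mul_const ‖x 0 - c‖)
  rw [affine_iterate_sub_eq_pow_mulVec hc hx]
  exact linfty_opNorm_mulVec _ _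

end LinftyOp

noncomputable def posP {V : Type*} [Fintype V] (A : Matrix V V ℝ) : Matrix V V ℝ :=
  Matrix.of fun i j => max (A i j) 0 / sdeg A i

noncomputable def negP {V : Type*} [Fintype V] (A : Matrix V V ℝ) : Matrix V V ℝ :=
  Matrix.of fun i j => max (-A i j) 0 / sdeg A i

section Transition

variable {V : Type*} [Fintype V] {A : Matrix V V ℝ}

variable (A) in
theorem signedP_eq_posP_sub_negP : signedP A = posP A - negP A := by
  ext i j
  simp only [signedP, posP, negP, of_apply, Matrix.sub_apply]
  rcases le_total 0 (A i j) with h | h <;> simp [h, neg_div]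

variable (A) in
theorem unsignedP_eq_posP_add_negP : unsignedP A = posP A + negP A := by
  ext i j
  simp only [unsignedP, posP, negP, of_apply, Matrix.add_apply]
  rcases le_total 0 (A i j) with h | h <;> simp [h, abs_of_nonneg, abs_of_nonpos]

variable (A) in
theorem gneg_eq_sum_negP (i : V) : gneg A i = ∑ j, negP A i j := by
  simp [gneg, negP, sum_div]

variable (hd : ∀ i, 0 < sdeg A i)
include hd

theorem posP_nonneg (i j : V) : 0 ≤ posP A i j :=
  div_nonneg (le_max_right _ _) (hd i).le

theorem negP_nonneg (i j : V) : 0 ≤ negP A i j :=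
  div_nonneg (le_max_right _ _) (hd i).le

theorem unsignedP_mem_rowStochastic [DecidableEq V] : unsignedP A ∈ rowStochastic ℝ V := by
  refine mem_rowStochastic_iff_sum.2 ⟨fun i j => div_nonneg (abs_nonneg _) (hd i).le, fun i => ?_⟩
  simp only [unsignedP, of_apply, ← sum_div]
  exact div_self (hd i).ne'

theorem signedP_mulVec_half_add_gneg [DecidableEq V] :
    signedP A *ᵥ (fun _ => 1 / 2) + gneg A = fun _ => 1 / 2 := by
  ext i
  have hrow := sum_row_of_mem_rowStochastic (unsignedP_mem_rowStochastic hd) i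
  simp only [unsignedP_eq_posP_add_negP, Matrix.add_apply, sum_add_distrib] at hrow
  simp only [Pi.add_apply, mulVec, dotProduct, signedP_eq_posP_sub_negP, Matrix.sub_apply,
    gneg_eq_sum_negP, ← sum_mul, sum_sub_distrib]
  linarith

theorem signSplitPow_pos_of_sWalk [DecidableEq V] {n : ℕ} {s : ℤ} {i j : V}
    (hw : SWalk (fun i j => A i j ≠ 0) (edgeSign A) n s i j) :
    0 < signSplitPow (posP A) (negP A) n s i j := by
  induction n generalizing s i with
  | zero =>
    obtain ⟨rfl, rfl⟩ := hw
    simp [signSplitPow]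
  | succ n ih =>
    obtain ⟨k, s, hik, hw, rfl⟩ := hw
    have hnn := signSplitPow.nonneg (posP_nonneg hd) (negP_nonneg hd) n
    simp only [signSplitPow, Matrix.add_apply, mul_apply]
    have hterm : ∀ (D : Matrix V V ℝ), (∀ l, 0 ≤ D i l) → ∀ t,
        D i k * signSplitPow (posP A) (negP A) n t k j ≤
          ∑ l, D i l * signSplitPow (posP A) (negP A) n t l j := fun D hD t =>
      single_le_sum (fun l _ => mul_nonneg (hD l) (hnn t l j)) (mem_univ k)
    have hsum : ∀ (D : Matrix V V ℝ), (∀ l, 0 ≤ D i l) → ∀ t,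
        0 ≤ ∑ l, D i l * signSplitPow (posP A) (negP A) n t l j := fun D hD t =>
      sum_nonneg fun l _ => mul_nonneg (hD l) (hnn t l j)
    rcases hik.lt_or_gt with hneg | hpos
    · have hk : 0 < negP A i k := div_pos (by simpa using hneg) (hd i)
      rw [show edgeSign A i k = -1 from if_neg hneg.not_gt, neg_one_mul, neg_neg]
      linarith [mul_pos hk (ih hw), hterm (negP A) (negP_nonneg hd i) s,
        hsum (posP A) (posP_nonneg hd i) (-s)]
    · have hk : 0 < posP A i k := div_pos (by simpa using hpos) (hd i)
      rw [show edgeSign A i k = 1 from if_pos hpos, one_mul]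
      linarith [mul_pos hk (ih hw), hterm (posP A) (posP_nonneg hd i) s,
        hsum (negP A) (negP_nonneg hd i) (-s)]

end Transition

section RowSums

variable {V : Type*} [Fintype V] [DecidableEq V] {A : Matrix V V ℝ} (hd : ∀ i, 0 < sdeg A i)
include hd

theorem abs_signedP_pow_apply_le (n : ℕ) (i j : V) :
    |(signedP A ^ n) i j| ≤ (unsignedP A ^ n) i j := by
  have hnn := signSplitPow.nonneg (posP_nonneg hd) (negP_nonneg hd) n
  rw [signedP_eq_posP_sub_negP, unsignedP_eq_posP_add_negP, signSplitPow.sub_pow,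
    signSplitPow.add_pow, Matrix.sub_apply, Matrix.add_apply]
  exact abs_sub_le_iff.2 ⟨by linarith [hnn (-1) i j], by linarith [hnn 1 i j]⟩

theorem abs_signedP_pow_apply_lt {n : ℕ} {i j : V}
    (hpos : SWalk (fun i j => A i j ≠ 0) (edgeSign A) n 1 i j)
    (hneg : SWalk (fun i j => A i j ≠ 0) (edgeSign A) n (-1) i j) :
    |(signedP A ^ n) i j| < (unsignedP A ^ n) i j := by
  rw [signedP_eq_posP_sub_negP, unsignedP_eq_posP_add_negP, signSplitPow.sub_pow,
    signSplitPow.add_pow, Matrix.sub_apply, Matrix.add_apply]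
  exact abs_sub_lt_iff.2 ⟨by linarith [signSplitPow_pos_of_sWalk hd hneg],
    by linarith [signSplitPow_pos_of_sWalk hd hpos]⟩

theorem sum_abs_signedP_pow_le_one (n : ℕ) (i : V) : ∑ j, |(signedP A ^ n) i j| ≤ 1 :=
  (sum_le_sum fun j _ => abs_signedP_pow_apply_le hd n i j).trans_eq
    (sum_row_of_mem_rowStochastic (pow_mem (unsignedP_mem_rowStochastic hd) n) i)

theorem sum_abs_signedP_pow_lt_one {n : ℕ} {i v : V}
    (hpos : SWalk (fun i j => A i j ≠ 0) (edgeSign A) n 1 i v)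
    (hneg : SWalk (fun i j => A i j ≠ 0) (edgeSign A) n (-1) i v) :
    ∑ j, |(signedP A ^ n) i j| < 1 :=
  (sum_lt_sum (fun j _ => abs_signedP_pow_apply_le hd n i j)
      ⟨v, mem_univ v, abs_signedP_pow_apply_lt hd hpos hneg⟩).trans_eq
    (sum_row_of_mem_rowStochastic (pow_mem (unsignedP_mem_rowStochastic hd) n) i)

theorem sum_abs_signedP_pow_lt_one_of_le {m n : ℕ} (hmn : m ≤ n) {i : V}
    (h : ∑ j, |(signedP A ^ m) i j| < 1) : ∑ j, |(signedP A ^ n) i j| < 1 := by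
  obtain ⟨k, rfl⟩ := Nat.exists_eq_add_of_le hmn
  rw [pow_add]
  exact (sum_abs_mul_apply_le (sum_abs_signedP_pow_le_one hd k) i).trans_lt h

end RowSums

/-- For an ergodic strictly unbalanced signed digraph, the voter model converges
to the all-(1/2) distribution regardless of the initial distribution. -/
theorem strictly_unbalanced_steady_state_half {V : Type*} [Fintype V] [DecidableEq V]
    (A : Matrix V V ℝ)
    (herg : SErgodic A)
    (hnb : ¬ SBalancedM A) (hna : ¬ SAntiBalancedM A)
    (x : ℕ → V → ℝ)
    (hx : ∀ t, x (t + 1) = (signedP A).mulVec (x t) + gneg A) :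
    Tendsto x atTop (nhds (fun _ => (1 : ℝ) / 2)) := by
  have hd := herg.sdeg_pos
  have hrow : ∀ i, ∃ n, ∑ j, |(signedP A ^ n) i j| < 1 := fun i => by
    obtain ⟨n, hpos, hneg⟩ := exists_closed_sWalk_one_and_neg_one (edgeSign_eq_one_or_neg_one A)
      herg.1 herg.2 (fun h => hnb (sBalancedM_of_sBalancedG_edgeSign h))
      (fun h => hna (sAntiBalancedM_of_sBalancedG_neg_edgeSign h)) i
    exact ⟨n, sum_abs_signedP_pow_lt_one hd hpos hneg⟩
  choose n hn using hrow
  refine tendsto_affine_iterate_of_sum_abs_pow_lt_one (signedP_mulVec_half_add_gneg hd)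
    (univ.sup n).succ_pos (fun i => ?_) hx
  exact sum_abs_signedP_pow_lt_one_of_le hd ((le_sup (mem_univ i)).trans (univ.sup n).le_succ)
    (hn i)
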